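/- Let D ⊆ F_q and D₁ ⊆ D₂ ⊆ F_q with k < |D₁|. If a function f: F_q → F_q generates a deep hole of RS_q(D₂, k), then its restriction to D₁ generates a deep hole of RS_q(D₁, k). Equivalently: if d((f(α))_{α∈D₂}, RS_q(D₂,k)) = |D₂| - k, then d((f(α))_{α∈D₁}, RS_q(D₁,k)) = |D₁| - k. -/

import Mathlib

/-- Error distance of a word `u` to a code `C`. -/
noncomputable def errDist {ι F : Type*} [Fintype ι] [DecidableEq F]
    (u : ι → F) (C : Set (ι → F)) : ℕ :=
  sInf ((fun c => hammingDist u c) '' C)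

/-- The Reed-Solomon code with evaluation set `D` and dimension `k`. -/
noncomputable def RSCode {F : Type*} [Field F] (D : Finset F) (k : ℕ) : Set (D → F) :=
  {v | ∃ f : Polynomial F, f.degree < k ∧ ∀ α : D, v α = f.eval (α : F)}

/-! Any `k` values are interpolated by a polynomial of degree `< k`, so the error distance to
`RS(D, k)` is at most `|D| - k`. Conversely, a nearest codeword of `RS(D₁, k)` is the
evaluation of a polynomial, which also gives a codeword of `RS(D₂, k)`; on `D₂` it can
additionally disagree with `f` only at the `|D₂| - |D₁|` new points, so if `f` were closer
than `|D₁| - k` to `RS(D₁, k)` it would be closer than `|D₂| - k` to `RS(D₂, k)`. -/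

open Finset

theorem hammingDist_restrict_eq_card_filter {α β : Type*} [DecidableEq α] [DecidableEq β]
    (D : Finset α) (f g : α → β) :
    hammingDist (fun x : D => f x) (fun x : D => g x) = #{x ∈ D | f x ≠ g x} := by
  rw [hammingDist, univ_eq_attach, filter_attach (fun x => f x ≠ g x), card_map, card_attach]

theorem card_filter_le_card_filter_add_card_sub {α : Type*} [DecidableEq α]
    {D₁ D₂ : Finset α} (h : D₁ ⊆ D₂) (p : α → Prop) [DecidablePred p] :
    #{x ∈ D₂ | p x} ≤ #{x ∈ D₁ | p x} + (#D₂ - #D₁) := by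
  calc #{x ∈ D₂ | p x} ≤ #({x ∈ D₁ | p x} ∪ (D₂ \ D₁)) := by
        refine card_le_card fun x hx => ?_
        simp only [mem_filter, mem_union, mem_sdiff] at hx ⊢
        tauto
    _ ≤ #{x ∈ D₁ | p x} + (#D₂ - #D₁) := by
        rw [← card_sdiff_of_subset h]
        exact card_union_le _ _

theorem errDist_le_hammingDist {ι F : Type*} [Fintype ι] [DecidableEq F]
    {u c : ι → F} {C : Set (ι → F)} (hc : c ∈ C) : errDist u C ≤ hammingDist u c :=
  Nat.sInf_le ⟨c, hc, rfl⟩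

theorem exists_hammingDist_eq_errDist {ι F : Type*} [Fintype ι] [DecidableEq F]
    (u : ι → F) {C : Set (ι → F)} (hC : C.Nonempty) :
    ∃ c ∈ C, hammingDist u c = errDist u C :=
  Nat.sInf_mem (hC.image _)

section RSCode

variable {F : Type*} [Field F]

theorem eval_mem_RSCode {D : Finset F} {k : ℕ} {p : Polynomial F} (hp : p.degree < k) :
    (fun α : D => p.eval (α : F)) ∈ RSCode D k :=
  ⟨p, hp, fun _ => rfl⟩

theorem errDist_RSCode_le_card_sub [DecidableEq F] (f : F → F) {D : Finset F} {k : ℕ}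
    (hk : k ≤ #D) :
    errDist (fun α : D => f α) (RSCode D k) ≤ #D - k := by
  obtain ⟨S, hSD, hS⟩ := exists_subset_card_eq hk
  set p := Lagrange.interpolate S id f
  have hp : p.degree < k := hS ▸ Lagrange.degree_interpolate_lt _ (Set.injOn_id _)
  calc errDist (fun α : D => f α) (RSCode D k)
      ≤ #{x ∈ D | f x ≠ p.eval x} := by
        rw [← hammingDist_restrict_eq_card_filter]
        exact errDist_le_hammingDist (eval_mem_RSCode hp)
    _ ≤ #(D \ S) := by
        refine card_le_card fun x hx => ?_
        simp only [mem_filter, mem_sdiff] at hx ⊢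
        exact ⟨hx.1, fun hxS =>
          hx.2 (Lagrange.eval_interpolate_at_node _ (Set.injOn_id _) hxS).symm⟩
    _ = #D - k := by rw [card_sdiff_of_subset hSD, hS]

theorem errDist_RSCode_le_of_subset [DecidableEq F] (f : F → F) {D₁ D₂ : Finset F}
    (h : D₁ ⊆ D₂) (k : ℕ) :
    errDist (fun α : D₂ => f α) (RSCode D₂ k) ≤
      errDist (fun α : D₁ => f α) (RSCode D₁ k) + (#D₂ - #D₁) := by
  obtain ⟨c, ⟨p, hp, hpc⟩, hdist⟩ := exists_hammingDist_eq_errDist (fun α : D₁ => f α)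
    ⟨_, eval_mem_RSCode (p := 0) (by simp)⟩
  obtain rfl : c = fun α : D₁ => p.eval (α : F) := funext hpc
  calc errDist (fun α : D₂ => f α) (RSCode D₂ k)
      ≤ #{x ∈ D₂ | f x ≠ p.eval x} := by
        rw [← hammingDist_restrict_eq_card_filter]
        exact errDist_le_hammingDist (eval_mem_RSCode hp)
    _ ≤ #{x ∈ D₁ | f x ≠ p.eval x} + (#D₂ - #D₁) :=
        card_filter_le_card_filter_add_card_sub h _
    _ = errDist (fun α : D₁ => f α) (RSCode D₁ k) + (#D₂ - #D₁) := by
        rw [← hammingDist_restrict_eq_card_filter, hdist]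

end RSCode

theorem stmt19_general {F : Type*} [Field F] [DecidableEq F]
    (k : ℕ) (D₁ D₂ : Finset F) (h12 : D₁ ⊆ D₂) (hk : k < D₁.card)
    (f : F → F)
    (h : errDist (fun α : D₂ => f (α : F)) (RSCode D₂ k) = D₂.card - k) :
    errDist (fun α : D₁ => f (α : F)) (RSCode D₁ k) = D₁.card - k := by
  refine le_antisymm (errDist_RSCode_le_card_sub f hk.le) ?_
  have hsub := errDist_RSCode_le_of_subset f h12 k
  have hcard := card_le_card h12
  omega

/-- Monotonicity of deep holes: a function generating a deep hole of `RS_q(D₂,k)`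
also generates a deep hole of `RS_q(D₁,k)` for `D₁ ⊆ D₂`. -/
theorem stmt19 {F : Type*} [Field F] [Fintype F] [DecidableEq F]
    (k : ℕ) (D₁ D₂ : Finset F) (h12 : D₁ ⊆ D₂) (hk : k < D₁.card)
    (f : F → F)
    (h : errDist (fun α : D₂ => f (α : F)) (RSCode D₂ k) = D₂.card - k) :
    errDist (fun α : D₁ => f (α : F)) (RSCode D₁ k) = D₁.card - k :=
  stmt19_general k D₁ D₂ h12 hk f h
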